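/- Let n ≥ 1 and let M be any 2^n × 2^n matrix with nonnegative real entries, with rows and columns indexed by the subsets a, b of [n] = {1,…,n}, such that M(a,b) = 1 whenever a ∩ b = ∅ and M(a,b) = 0 whenever |a ∩ b| = 1 (the entries for |a ∩ b| ≥ 2 are arbitrary nonnegative reals). Then rank₊(M) ≥ (3/2)^n. -/

import Mathlib

attribute [local instance] Classical.propDecidable

open Matrix Filter

noncomputable section

/-- The nonnegative rank of a real matrix: the least `r` such that `M = T * U`
with `T`, `U` entrywise nonnegative. -/
def nnegRank {m n : Type*} (M : Matrix m n ℝ) : ℕ :=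
  sInf { r : ℕ | ∃ (T : Matrix m (Fin r) ℝ) (U : Matrix (Fin r) n ℝ),
    (∀ i j, 0 ≤ T i j) ∧ (∀ i j, 0 ≤ U i j) ∧ M = T * U }

/-- An LP formulation of size `r` of the maximization problem with feasible solutions `S`,
objective functions indexed by `F` (given by `obj`), and approximation guarantees `guar`:
a system of `r` linear inequalities and `k` linear equations in `ℝ^d`, realizations `x s` of
feasible solutions (satisfying the system), realizations `w f` of objective functions
(`⟪w f, x s⟫ = obj f s`), such that the LP value is at most the guarantee. -/
def IsLPFormulation {S F : Type*} (obj : F → S → ℝ) (guar : F → ℝ) (r : ℕ) : Prop :=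
  ∃ (d k : ℕ) (Ai : Matrix (Fin r) (Fin d) ℝ) (bi : Fin r → ℝ)
    (Ae : Matrix (Fin k) (Fin d) ℝ) (be : Fin k → ℝ)
    (x : S → Fin d → ℝ) (w : F → Fin d → ℝ),
    (∀ s, (∀ i, Ai.mulVec (x s) i ≤ bi i) ∧ Ae.mulVec (x s) = be) ∧
    (∀ f s, w f ⬝ᵥ x s = obj f s) ∧
    (∀ f (y : Fin d → ℝ), (∀ i, Ai.mulVec y i ≤ bi i) → Ae.mulVec y = be →
      w f ⬝ᵥ y ≤ guar f)

/-- Formulation complexity: minimum size of an LP formulation. -/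
def xcLP {S F : Type*} (obj : F → S → ℝ) (guar : F → ℝ) : ℕ :=
  sInf { r | IsLPFormulation obj guar r }

/-- A stable (independent) set in a graph. -/
def IsStableSet {V : Type*} (G : SimpleGraph V) (s : Finset V) : Prop :=
  ∀ u ∈ s, ∀ v ∈ s, ¬ G.Adj u v

/-- The stability number of a graph. -/
def stabNum {V : Type*} [Fintype V] (G : SimpleGraph V) : ℕ :=
  sSup { k | ∃ s : Finset V, IsStableSet G s ∧ s.card = k }

/-- The formulation complexity of the maximum stable set problem `STAB(G)`:
feasible solutions are the stable sets of `G`, objective functions are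
`f_a(S) = |S ∩ a|` for `a ⊆ V(G)`, guarantees are `α(G[a])`. -/
def xcSTAB {V : Type*} [Fintype V] (G : SimpleGraph V) : ℕ :=
  xcLP (fun (a : Finset V) (s : {s : Finset V // IsStableSet G s}) => ((s.val ∩ a).card : ℝ))
       (fun a : Finset V => (stabNum (G.induce (↑a : Set V)) : ℝ))

/-- Probability of an event under the Erdős–Rényi distribution `G(n,p)`. -/
def erProb (n : ℕ) (p : ℝ) (E : SimpleGraph (Fin n) → Prop) : ℝ :=
  ∑ G : SimpleGraph (Fin n),
    if E G then p ^ Nat.card G.edgeSet * (1 - p) ^ (n.choose 2 - Nat.card G.edgeSet) else 0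

/-- The smaller endpoint of an unordered pair. -/
def sym2Min {α : Type*} [LinearOrder α] (e : Sym2 α) : α :=
  Sym2.lift ⟨fun a b => min a b, fun a b => min_comm a b⟩ e

/-- The larger endpoint of an unordered pair. -/
def sym2Max {α : Type*} [LinearOrder α] (e : Sym2 α) : α :=
  Sym2.lift ⟨fun a b => max a b, fun a b => max_comm a b⟩ e

/-- Adjacency of the gadget subdivision `T^g` with parameter `ℓ`: every edge `ij` of `T`
is replaced by a path with `2ℓ+3` edges between `i` and `j`, whose `2ℓ+2` internal vertices
are new and pairwise distinct across edges. -/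
def gadgetAdj {α : Type*} [LinearOrder α] (T : SimpleGraph α) (ℓ : ℕ) :
    (α ⊕ (↥T.edgeSet × Fin (2*ℓ+2))) → (α ⊕ (↥T.edgeSet × Fin (2*ℓ+2))) → Prop
  | Sum.inl _, Sum.inl _ => False
  | Sum.inl u, Sum.inr ek =>
      (ek.2.val = 0 ∧ u = sym2Min ek.1.val) ∨ (ek.2.val = 2*ℓ+1 ∧ u = sym2Max ek.1.val)
  | Sum.inr ek, Sum.inl u =>
      (ek.2.val = 0 ∧ u = sym2Min ek.1.val) ∨ (ek.2.val = 2*ℓ+1 ∧ u = sym2Max ek.1.val)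
  | Sum.inr ek, Sum.inr ek' =>
      ek.1 = ek'.1 ∧ (ek.2.val + 1 = ek'.2.val ∨ ek'.2.val + 1 = ek.2.val)

/-- The gadget subdivision `T^g` of a graph `T` with parameter `ℓ`. -/
def gadget {α : Type*} [LinearOrder α] (T : SimpleGraph α) (ℓ : ℕ) :
    SimpleGraph (α ⊕ (↥T.edgeSet × Fin (2*ℓ+2))) where
  Adj := gadgetAdj T ℓ
  symm := by
    constructor
    rintro (u | ek) (v | ek') h
    · exact h.elim
    · exact h
    · exact h
    · exact ⟨h.1.symm, h.2.symm⟩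
  loopless := by
    constructor
    rintro (u | ek) h
    · exact h.elim
    · exact h.2.elim (fun h' => by omega) (fun h' => by omega)

/-- A simple graph with vertex set contained in `[n] = {1, …, n}` (modelled as `Fin n`):
a pair of a simple graph on `Fin n` and its vertex set, containing all endpoints of edges. -/
def GraphOn (n : ℕ) : Type :=
  { GV : SimpleGraph (Fin n) × Finset (Fin n) //
      ∀ u v, GV.1.Adj u v → u ∈ GV.2 ∧ v ∈ GV.2 }

instance (n : ℕ) : Fintype (GraphOn n) :=
  Subtype.fintype _

/-- The stability number of a graph with vertex set `⊆ [n]`: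
stable sets must consist of vertices of the graph. -/
def alphaOn {n : ℕ} (G : GraphOn n) : ℕ :=
  sSup { k | ∃ s : Finset (Fin n), s ⊆ G.val.2 ∧ IsStableSet G.val.1 s ∧ s.card = k }

/-- Probability of an event for a random family of graphs, where each graph with vertex
set `⊆ [n]` is included in the family independently with probability `p`. -/
def famProb (n : ℕ) (p : ℝ) (E : Finset (GraphOn n) → Prop) : ℝ :=
  ∑ 𝒢 : Finset (GraphOn n),
    if E 𝒢 then p ^ 𝒢.card * (1 - p) ^ (Fintype.card (GraphOn n) - 𝒢.card) else 0

end

/-!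
Write `M = T * U` with `r = rank₊ M` nonnegative rank-one terms. The supports of the terms are
rectangles `𝒜ₖ × ℬₖ` which cover every disjoint pair `(a, b)` (there `M a b = 1`) and contain no
pair with `#(a ∩ b) = 1` (there `M a b = 0`). Such a rectangle contains at most `2 ^ n` disjoint
pairs: splitting off one element `i`, the disjoint pairs avoiding `i`, those with `i ∈ a` and those
with `i ∈ b` fit into two rectangles of the same kind on `n - 1` elements. As there are `3 ^ n`
disjoint pairs in all, `r * 2 ^ n ≥ 3 ^ n`.
-/

open Finset

namespace Finset

variable {α : Type*} [DecidableEq α]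

lemma sum_nonMemberSubfamily_add_sum_memberSubfamily {M : Type*} [AddCommMonoid M] (a : α)
    (𝒜 : Finset (Finset α)) (f : Finset α → M) :
    ∑ s ∈ 𝒜.nonMemberSubfamily a, f s + ∑ s ∈ 𝒜.memberSubfamily a, f (insert a s) =
      ∑ s ∈ 𝒜, f s := by
  have hinj : Set.InjOn (insert a) (𝒜.memberSubfamily a : Set (Finset α)) := fun s hs t ht hst => by
    rw [← erase_insert (mem_memberSubfamily.1 hs).2, hst, erase_insert (mem_memberSubfamily.1 ht).2]
  rw [← sum_image hinj, image_insert_memberSubfamily, nonMemberSubfamily, add_comm,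
    sum_filter_add_sum_filter_not]

lemma nonMemberSubfamily_powerset_insert {a : α} {s : Finset α} (ha : a ∉ s) :
    (insert a s).powerset.nonMemberSubfamily a = s.powerset := by
  ext t
  simp only [mem_nonMemberSubfamily, mem_powerset]
  exact ⟨fun h => (subset_insert_iff_of_notMem h.2).1 h.1,
    fun h => ⟨h.trans (subset_insert _ _), fun hat => ha (h hat)⟩⟩

lemma memberSubfamily_powerset_insert {a : α} {s : Finset α} (ha : a ∉ s) :
    (insert a s).powerset.memberSubfamily a = s.powerset := by
  ext t
  simp only [mem_memberSubfamily, mem_powerset]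
  exact ⟨fun h => (insert_subset_insert_iff h.2).1 h.1,
    fun h => ⟨insert_subset_insert _ h, fun hat => ha (h hat)⟩⟩

def disjointPairs (𝒜 ℬ : Finset (Finset α)) : Finset (Finset α × Finset α) :=
  {p ∈ 𝒜 ×ˢ ℬ | Disjoint p.1 p.2}

variable {𝒜 𝒜' ℬ ℬ' : Finset (Finset α)}

lemma mem_disjointPairs {p : Finset α × Finset α} :
    p ∈ disjointPairs 𝒜 ℬ ↔ p.1 ∈ 𝒜 ∧ p.2 ∈ ℬ ∧ Disjoint p.1 p.2 := by
  simp [disjointPairs, and_assoc]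

lemma disjointPairs_union_left :
    disjointPairs (𝒜 ∪ 𝒜') ℬ = disjointPairs 𝒜 ℬ ∪ disjointPairs 𝒜' ℬ := by
  simp only [disjointPairs, union_product, filter_union]

lemma disjointPairs_union_right :
    disjointPairs 𝒜 (ℬ ∪ ℬ') = disjointPairs 𝒜 ℬ ∪ disjointPairs 𝒜 ℬ' := by
  simp only [disjointPairs, product_union, filter_union]

lemma card_disjointPairs_eq_sum (𝒜 ℬ : Finset (Finset α)) :
    #(disjointPairs 𝒜 ℬ) = ∑ s ∈ 𝒜, ∑ t ∈ ℬ, if Disjoint s t then 1 else 0 := by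
  rw [disjointPairs, card_filter, sum_product]

lemma card_disjointPairs_eq_add_add (a : α) (𝒜 ℬ : Finset (Finset α)) :
    #(disjointPairs 𝒜 ℬ) =
      #(disjointPairs (𝒜.nonMemberSubfamily a) (ℬ.nonMemberSubfamily a)) +
      #(disjointPairs (𝒜.memberSubfamily a) (ℬ.nonMemberSubfamily a)) +
      #(disjointPairs (𝒜.nonMemberSubfamily a) (ℬ.memberSubfamily a)) := by
  simp only [card_disjointPairs_eq_sum]
  rw [← sum_nonMemberSubfamily_add_sum_memberSubfamily a 𝒜]
  simp_rw [← sum_nonMemberSubfamily_add_sum_memberSubfamily a ℬ, sum_add_distrib]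
  have h01 : ∑ s ∈ 𝒜.nonMemberSubfamily a, ∑ t ∈ ℬ.memberSubfamily a,
      (if Disjoint s (insert a t) then 1 else 0) =
      ∑ s ∈ 𝒜.nonMemberSubfamily a, ∑ t ∈ ℬ.memberSubfamily a, if Disjoint s t then 1 else 0 :=
    sum_congr rfl fun s hs => by simp [(mem_nonMemberSubfamily.1 hs).2]
  have h10 : ∑ s ∈ 𝒜.memberSubfamily a, ∑ t ∈ ℬ.nonMemberSubfamily a,
      (if Disjoint (insert a s) t then 1 else 0) =
      ∑ s ∈ 𝒜.memberSubfamily a, ∑ t ∈ ℬ.nonMemberSubfamily a, if Disjoint s t then 1 else 0 :=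
    sum_congr rfl fun _ _ => sum_congr rfl fun t ht => by simp [(mem_nonMemberSubfamily.1 ht).2]
  have h11 : ∑ s ∈ 𝒜.memberSubfamily a, ∑ t ∈ ℬ.memberSubfamily a,
      (if Disjoint (insert a s) (insert a t) then 1 else 0) = 0 := by
    simp
  rw [h01, h10, h11]
  ring

lemma card_disjointPairs_add_add_le {𝒜₀ 𝒜₁ ℬ₀ ℬ₁ : Finset (Finset α)}
    (h : ∀ s ∈ 𝒜₁, ∀ t ∈ ℬ₁, ¬Disjoint s t) :
    #(disjointPairs 𝒜₀ ℬ₀) + #(disjointPairs 𝒜₁ ℬ₀) + #(disjointPairs 𝒜₀ ℬ₁) ≤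
      #(disjointPairs (𝒜₁ ∪ 𝒜₀) ℬ₀) + #(disjointPairs 𝒜₀ (ℬ₁ ∪ ℬ₀)) := by
  have h𝒜 := card_union_add_card_inter (disjointPairs 𝒜₁ ℬ₀) (disjointPairs 𝒜₀ ℬ₀)
  have hℬ := card_union_add_card_inter (disjointPairs 𝒜₀ ℬ₁) (disjointPairs 𝒜₀ ℬ₀)
  -- A pair of `𝒜₀ × ℬ₀` lies in at most one of the two overlaps: `𝒜₁ × ℬ₁` has no disjoint pair.
  have hdisj : Disjoint (disjointPairs 𝒜₁ ℬ₀ ∩ disjointPairs 𝒜₀ ℬ₀)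
      (disjointPairs 𝒜₀ ℬ₁ ∩ disjointPairs 𝒜₀ ℬ₀) := by
    rw [disjoint_left]
    intro p hp hq
    simp only [mem_inter, mem_disjointPairs] at hp hq
    exact h _ hp.1.1 _ hq.1.2.1 hp.1.2.2
  have hle : #(disjointPairs 𝒜₁ ℬ₀ ∩ disjointPairs 𝒜₀ ℬ₀) +
      #(disjointPairs 𝒜₀ ℬ₁ ∩ disjointPairs 𝒜₀ ℬ₀) ≤ #(disjointPairs 𝒜₀ ℬ₀) := by
    rw [← card_union_of_disjoint hdisj]
    exact card_le_card (union_subset inter_subset_right inter_subset_right)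
  rw [disjointPairs_union_left, disjointPairs_union_right]
  omega

def NoUniqueIntersection (𝒜 ℬ : Finset (Finset α)) : Prop :=
  ∀ s ∈ 𝒜, ∀ t ∈ ℬ, #(s ∩ t) ≠ 1

lemma NoUniqueIntersection.symm (h : NoUniqueIntersection 𝒜 ℬ) : NoUniqueIntersection ℬ 𝒜 :=
  fun t ht s hs => by rw [inter_comm]; exact h s hs t ht

lemma NoUniqueIntersection.image_erase_nonMemberSubfamily (h : NoUniqueIntersection 𝒜 ℬ)
    (a : α) : NoUniqueIntersection (𝒜.image (erase · a)) (ℬ.nonMemberSubfamily a) := by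
  simp only [NoUniqueIntersection, forall_mem_image, mem_nonMemberSubfamily]
  rintro s hs t ⟨ht, hat⟩
  rw [erase_inter, erase_eq_of_notMem fun hai => hat (mem_inter.1 hai).2]
  exact h s hs t ht

lemma NoUniqueIntersection.not_disjoint_memberSubfamily (h : NoUniqueIntersection 𝒜 ℬ) (a : α) :
    ∀ s ∈ 𝒜.memberSubfamily a, ∀ t ∈ ℬ.memberSubfamily a, ¬Disjoint s t := by
  intro s hs t ht hst
  rw [mem_memberSubfamily] at hs ht
  apply h _ hs.1 _ ht.1
  rw [← insert_inter_distrib, disjoint_iff_inter_eq_empty.1 hst, insert_empty, card_singleton]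

theorem card_disjointPairs_le_two_pow {s : Finset α} (h : NoUniqueIntersection 𝒜 ℬ)
    (h𝒜 : ∀ t ∈ 𝒜, t ⊆ s) (hℬ : ∀ t ∈ ℬ, t ⊆ s) : #(disjointPairs 𝒜 ℬ) ≤ 2 ^ #s := by
  induction s using Finset.induction generalizing 𝒜 ℬ with
  | empty =>
    have hsub (𝒞 : Finset (Finset α)) (h𝒞 : ∀ t ∈ 𝒞, t ⊆ ∅) : #𝒞 ≤ 1 :=
      card_le_one.2 fun t ht u hu => by rw [subset_empty.1 (h𝒞 t ht), subset_empty.1 (h𝒞 u hu)]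
    calc #(disjointPairs 𝒜 ℬ) ≤ #(𝒜 ×ˢ ℬ) := card_filter_le _ _
      _ = #𝒜 * #ℬ := card_product _ _
      _ ≤ 1 * 1 := Nat.mul_le_mul (hsub 𝒜 h𝒜) (hsub ℬ hℬ)
      _ = 2 ^ #∅ := rfl
  | insert a s ha ih =>
    have himage (𝒞 : Finset (Finset α)) (h𝒞 : ∀ t ∈ 𝒞, t ⊆ insert a s) :
        ∀ t ∈ 𝒞.image (erase · a), t ⊆ s := by
      simp only [forall_mem_image]
      exact fun t ht => subset_insert_iff.1 (h𝒞 t ht)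
    have hnon (𝒞 : Finset (Finset α)) (h𝒞 : ∀ t ∈ 𝒞, t ⊆ insert a s) :
        ∀ t ∈ 𝒞.nonMemberSubfamily a, t ⊆ s := fun t ht =>
      himage 𝒞 h𝒞 t (memberSubfamily_union_nonMemberSubfamily a 𝒞 ▸ mem_union_right _ ht)
    calc #(disjointPairs 𝒜 ℬ)
        ≤ #(disjointPairs (𝒜.image (erase · a)) (ℬ.nonMemberSubfamily a)) +
            #(disjointPairs (𝒜.nonMemberSubfamily a) (ℬ.image (erase · a))) := by
          rw [card_disjointPairs_eq_add_add a, ← memberSubfamily_union_nonMemberSubfamily,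
            ← memberSubfamily_union_nonMemberSubfamily]
          exact card_disjointPairs_add_add_le (h.not_disjoint_memberSubfamily a)
      _ ≤ 2 ^ #s + 2 ^ #s := add_le_add
          (ih (h.image_erase_nonMemberSubfamily a) (himage 𝒜 h𝒜) (hnon ℬ hℬ))
          (ih (h.symm.image_erase_nonMemberSubfamily a).symm (hnon 𝒜 h𝒜) (himage ℬ hℬ))
      _ = 2 ^ #(insert a s) := by rw [card_insert_of_notMem ha, pow_succ, mul_two]

theorem card_disjointPairs_powerset (s : Finset α) :
    #(disjointPairs s.powerset s.powerset) = 3 ^ #s := by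
  induction s using Finset.induction with
  | empty => rfl
  | insert a s ha ih =>
    rw [card_disjointPairs_eq_add_add a, nonMemberSubfamily_powerset_insert ha,
      memberSubfamily_powerset_insert ha, ih, card_insert_of_notMem ha, pow_succ]
    ring

theorem three_pow_le_card_mul_two_pow [Fintype α] {ι : Type*} [Fintype ι]
    (𝒜 ℬ : ι → Finset (Finset α)) (h : ∀ i, NoUniqueIntersection (𝒜 i) (ℬ i))
    (hcover : ∀ s t : Finset α, Disjoint s t → ∃ i, s ∈ 𝒜 i ∧ t ∈ ℬ i) :
    3 ^ Fintype.card α ≤ Fintype.card ι * 2 ^ Fintype.card α := by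
  calc 3 ^ Fintype.card α = #(disjointPairs (univ : Finset (Finset α)) univ) := by
        rw [← powerset_univ, card_disjointPairs_powerset, card_univ]
    _ ≤ #(univ.biUnion fun i => disjointPairs (𝒜 i) (ℬ i)) := by
        refine card_le_card fun p hp => ?_
        have hdisj := (mem_disjointPairs.1 hp).2.2
        obtain ⟨i, hs, ht⟩ := hcover p.1 p.2 hdisj
        exact mem_biUnion.2 ⟨i, mem_univ i, mem_disjointPairs.2 ⟨hs, ht, hdisj⟩⟩
    _ ≤ ∑ i, #(disjointPairs (𝒜 i) (ℬ i)) := card_biUnion_le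
    _ ≤ ∑ _i : ι, 2 ^ Fintype.card α := sum_le_sum fun i _ => by
        simpa using card_disjointPairs_le_two_pow (h i) (fun t _ => subset_univ t)
          (fun t _ => subset_univ t)
    _ = Fintype.card ι * 2 ^ Fintype.card α := by rw [sum_const, card_univ, smul_eq_mul]

end Finset

namespace Matrix

lemma mul_apply_pos_iff {m n o R : Type*} [Fintype n] [CommSemiring R] [LinearOrder R]
    [IsStrictOrderedRing R] {T : Matrix m n R} {U : Matrix n o R}
    (hT : ∀ i j, 0 ≤ T i j) (hU : ∀ i j, 0 ≤ U i j) (i : m) (k : o) :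
    0 < (T * U) i k ↔ ∃ j, 0 < T i j ∧ 0 < U j k := by
  rw [mul_apply, sum_pos_iff_of_nonneg fun j _ => mul_nonneg (hT i j) (hU j k)]
  refine exists_congr fun j => ⟨fun ⟨_, hj⟩ => ?_, fun hj => ⟨mem_univ j, mul_pos hj.1 hj.2⟩⟩
  exact ⟨pos_of_mul_pos_left hj (hU j k), pos_of_mul_pos_right hj (hT i j)⟩

end Matrix

lemma exists_nonneg_factorization_nnegRank {m n : Type*} [Fintype n] {M : Matrix m n ℝ}
    (hM : ∀ i j, 0 ≤ M i j) :
    ∃ (T : Matrix m (Fin (nnegRank M)) ℝ) (U : Matrix (Fin (nnegRank M)) n ℝ),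
      (∀ i j, 0 ≤ T i j) ∧ (∀ i j, 0 ≤ U i j) ∧ M = T * U := by
  classical
  let e := Fintype.equivFin n
  have hne : {r : ℕ | ∃ (T : Matrix m (Fin r) ℝ) (U : Matrix (Fin r) n ℝ),
      (∀ i j, 0 ≤ T i j) ∧ (∀ i j, 0 ≤ U i j) ∧ M = T * U}.Nonempty := by
    refine ⟨Fintype.card n, M.submatrix id e.symm, (1 : Matrix n n ℝ).submatrix e.symm id,
      fun i j => hM _ _, fun i j => ?_, ?_⟩
    · simp only [submatrix_apply, id, one_apply]
      split_ifs <;> norm_num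
    · rw [submatrix_mul_equiv, Matrix.mul_one, submatrix_id_id]
  exact Nat.sInf_mem hne

theorem udisj_nnegRank_lower_bound_general (n : ℕ)
    (M : Matrix (Finset (Fin n)) (Finset (Fin n)) ℝ)
    (hpos : ∀ a b, 0 ≤ M a b)
    (h0 : ∀ a b, a ∩ b = ∅ → M a b = 1)
    (h1 : ∀ a b, (a ∩ b).card = 1 → M a b = 0) :
    ((3 : ℝ) / 2) ^ n ≤ (nnegRank M : ℝ) := by
  obtain ⟨T, U, hT, hU, hM⟩ := exists_nonneg_factorization_nnegRank hpos
  have hsupp (a b : Finset (Fin n)) : 0 < M a b ↔ ∃ k, 0 < T a k ∧ 0 < U k b :=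
    congrFun₂ hM a b ▸ Matrix.mul_apply_pos_iff hT hU a b
  have hcount := three_pow_le_card_mul_two_pow (fun k => {a | 0 < T a k}) (fun k => {b | 0 < U k b})
    (fun k a ha b hb hab => by
      simp only [mem_filter, mem_univ, true_and] at ha hb
      exact ((hsupp a b).2 ⟨k, ha, hb⟩).ne' (h1 a b hab))
    (fun a b hab => by
      simpa using (hsupp a b).1 (by rw [h0 a b (disjoint_iff_inter_eq_empty.1 hab)]; exact one_pos))
  simp only [Fintype.card_fin] at hcount
  rw [div_pow, div_le_iff₀ (by positivity)]
  exact_mod_cast hcount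

/-- Every nonnegative `2^n × 2^n` matrix, indexed by subsets `a, b` of
`[n]`, with `M(a,b) = 1` whenever `a ∩ b = ∅` and `M(a,b) = 0` whenever `|a ∩ b| = 1`
(a completion of the unique disjointness matrix `UDISJ(n)`), satisfies
`rank₊(M) ≥ (3/2)^n`. -/
theorem udisj_nnegRank_lower_bound (n : ℕ) (hn : 1 ≤ n)
    (M : Matrix (Finset (Fin n)) (Finset (Fin n)) ℝ)
    (hpos : ∀ a b, 0 ≤ M a b)
    (h0 : ∀ a b, a ∩ b = ∅ → M a b = 1)
    (h1 : ∀ a b, (a ∩ b).card = 1 → M a b = 0) :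
    ((3 : ℝ) / 2) ^ n ≤ (nnegRank M : ℝ) :=
  udisj_nnegRank_lower_bound_general n M hpos h0 h1
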